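/- Let γ > 0, C > 0 and z ∈ ℝ with 0 < z ≤ √(2γC). Then u = 0 is a global minimizer over ℝ of the function φ(u) = γC·χ(u) + (1/2)(u − z)², where χ(u) = 1 if u > 0 and χ(u) = 0 if u ≤ 0. Moreover, if 0 < z < √(2γC) (strict inequality), then u = 0 is the unique global minimizer of φ. -/

import Mathlib

/-! On `u ≤ 0` the objective is the parabola `(u - z)² / 2`, which for `z ≥ 0` is smallest at
`u = 0`; on `u > 0` it is at least the jump `γC`, which dominates `φ(0) = z² / 2` exactly when
`z² ≤ 2γC`, i.e. `z ≤ √(2γC)`. -/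

/-- The scalar `L_{0/1}` proximal objective
`φ(u) = γC·χ(u) + (1/2)(u − z)²`, where `χ(u) = 1` if `u > 0` and `0` otherwise. -/
noncomputable def scalarProxObj (γ C z u : ℝ) : ℝ :=
  γ * C * (if 0 < u then (1 : ℝ) else 0) + (1 / 2) * (u - z) ^ 2

section

variable {γ C z u : ℝ}

theorem scalarProxObj_of_nonpos (hu : u ≤ 0) :
    scalarProxObj γ C z u = (1 / 2) * (u - z) ^ 2 := by
  simp [scalarProxObj, not_lt.mpr hu]

theorem scalarProxObj_of_pos (hu : 0 < u) :
    scalarProxObj γ C z u = γ * C + (1 / 2) * (u - z) ^ 2 := by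
  simp [scalarProxObj, hu]

theorem scalarProxObj_zero : scalarProxObj γ C z 0 = z ^ 2 / 2 := by
  rw [scalarProxObj_of_nonpos le_rfl]
  ring

theorem scalarProxObj_zero_le (hz0 : 0 ≤ z) (hz : z ^ 2 ≤ 2 * γ * C) :
    scalarProxObj γ C z 0 ≤ scalarProxObj γ C z u := by
  rw [scalarProxObj_zero]
  rcases le_or_gt u 0 with hu | hu
  · rw [scalarProxObj_of_nonpos hu]
    nlinarith
  · rw [scalarProxObj_of_pos hu]
    nlinarith [sq_nonneg (u - z)]

theorem scalarProxObj_zero_lt (hz0 : 0 ≤ z) (hz : z ^ 2 < 2 * γ * C) (hu : u ≠ 0) :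
    scalarProxObj γ C z 0 < scalarProxObj γ C z u := by
  rw [scalarProxObj_zero]
  rcases hu.lt_or_gt with hu | hu
  · rw [scalarProxObj_of_nonpos hu.le]
    nlinarith
  · rw [scalarProxObj_of_pos hu]
    nlinarith [sq_nonneg (u - z)]

end

theorem scalarProx_zero_min_general (γ C z : ℝ)
    (hz0 : 0 < z) (hz : z ≤ Real.sqrt (2 * γ * C)) :
    (∀ u : ℝ, scalarProxObj γ C z 0 ≤ scalarProxObj γ C z u) ∧
    (z < Real.sqrt (2 * γ * C) →
      ∀ u : ℝ, (∀ v : ℝ, scalarProxObj γ C z u ≤ scalarProxObj γ C z v) → u = 0) := by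
  refine ⟨fun u ↦ scalarProxObj_zero_le hz0.le ((Real.le_sqrt' hz0).mp hz), ?_⟩
  intro hlt u hmin
  by_contra hu
  exact (hmin 0).not_gt (scalarProxObj_zero_lt hz0.le ((Real.lt_sqrt hz0.le).mp hlt) hu)

/-- for `0 < z ≤ √(2γC)`, `u = 0` globally minimizes the scalar
`L_{0/1}` proximal objective; if moreover `z < √(2γC)`, it is the unique global
minimizer. -/
theorem scalarProx_zero_min (γ C z : ℝ) (hγ : 0 < γ) (hC : 0 < C)
    (hz0 : 0 < z) (hz : z ≤ Real.sqrt (2 * γ * C)) :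
    (∀ u : ℝ, scalarProxObj γ C z 0 ≤ scalarProxObj γ C z u) ∧
    (z < Real.sqrt (2 * γ * C) →
      ∀ u : ℝ, (∀ v : ℝ, scalarProxObj γ C z u ≤ scalarProxObj γ C z v) → u = 0) :=
  scalarProx_zero_min_general γ C z hz0 hz
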